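/- Let l ≥ 2 and let c̃, α, α₃, …, α_l be real numbers. Let W̃₂ be the l×l quaternion matrix c̃·E₁₂ + α(iG₁ + iG₂) + Σ_{q=3}^{l} α_q·iG_q, where E₁₂ has 1 in entry (1,2), −1 in entry (2,1), zeros elsewhere, and G_q has √2 in entry (q,q) and zeros elsewhere. Then the characteristic polynomial of the 2l×2l complex matrix dπ(W̃₂) equals (λ⁴ + 2(c̃² + 2α²)λ² + (c̃² − 2α²)²)·∏_{q=3}^{l}(λ² + 2α_q²). -/

import Mathlib

/-!
`W̃₂` has no `j`-component, so it is the image of a complex matrix `Z` under `ℂ ⊆ ℍ`, and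
`dπ(W̃₂) = diag(Z, Z̄)` has characteristic polynomial `χ_Z · conj χ_Z`. Splitting off the indices `1, 2`,
`Z` is block diagonal: the `2 × 2` block `[[i√2α, c̃], [−c̃, i√2α]]` followed by
the diagonal entries `i√2αq`. Multiplying each factor of `χ_Z` by its conjugate gives the real
polynomials of the statement.
-/

open Quaternion Matrix Polynomial

/-- The quaternion unit `i`. -/
noncomputable def qi : ℍ[ℝ] := ⟨0, 1, 0, 0⟩
/-- The quaternion unit `j`. -/
noncomputable def qj : ℍ[ℝ] := ⟨0, 0, 1, 0⟩

/-- `G_q`: the `l × l` quaternion matrix with `√2` in entry `(q,q)` and zeros elsewhere. -/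
noncomputable def Gmat (l : ℕ) (q : Fin l) : Matrix (Fin l) (Fin l) ℍ[ℝ] :=
  Matrix.single q q (((Real.sqrt 2 : ℝ) : ℍ[ℝ]))

/-- `E₁₂`: the `l × l` quaternion matrix with `1` in entry `(1,2)`, `−1` in entry
`(2,1)` and zeros elsewhere. -/
noncomputable def Emat (l : ℕ) [NeZero l] (i j : Fin l) : Matrix (Fin l) (Fin l) ℍ[ℝ] :=
  Matrix.single i j 1 - Matrix.single j i 1

/-- The complex matrix `X` in the unique decomposition `W = X + jY` of a quaternion
matrix `W` (identifying `ℂ` with the real span of `1` and `i` in `ℍ`). -/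
noncomputable def quatX (l : ℕ) (W : Matrix (Fin l) (Fin l) ℍ[ℝ]) :
    Matrix (Fin l) (Fin l) ℂ :=
  fun p q => ⟨(W p q).re, (W p q).imI⟩

/-- The complex matrix `Y` in the unique decomposition `W = X + jY` of a quaternion
matrix `W`. -/
noncomputable def quatY (l : ℕ) (W : Matrix (Fin l) (Fin l) ℍ[ℝ]) :
    Matrix (Fin l) (Fin l) ℂ :=
  fun p q => ⟨(W p q).imJ, -(W p q).imK⟩

/-- The embedding `dπ : M_l(ℍ) → M_{2l}(ℂ)`, `W = X + jY ↦ [[X, −conj Y], [Y, conj X]]`. -/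
noncomputable def dpi (l : ℕ) (W : Matrix (Fin l) (Fin l) ℍ[ℝ]) :
    Matrix (Fin l ⊕ Fin l) (Fin l ⊕ Fin l) ℂ :=
  Matrix.fromBlocks (quatX l W) (-(quatY l W).map (starRingEnd ℂ))
    (quatY l W) ((quatX l W).map (starRingEnd ℂ))

theorem quatX_map_ofComplex {l : ℕ} (Z : Matrix (Fin l) (Fin l) ℂ) :
    quatX l (Z.map Quaternion.ofComplex) = Z :=
  rfl

theorem quatY_map_ofComplex {l : ℕ} (Z : Matrix (Fin l) (Fin l) ℂ) :
    quatY l (Z.map Quaternion.ofComplex) = 0 := by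
  ext p q : 2
  apply Complex.ext <;> simp [quatY]

theorem charpoly_dpi_map_ofComplex {l : ℕ} (Z : Matrix (Fin l) (Fin l) ℂ) :
    (dpi l (Z.map Quaternion.ofComplex)).charpoly =
      Z.charpoly * Z.charpoly.map (starRingEnd ℂ) := by
  rw [dpi, quatX_map_ofComplex, quatY_map_ofComplex]
  simp [charpoly_map]

theorem qi_eq_ofComplex_I : qi = Quaternion.ofComplex Complex.I := by
  ext <;> rfl

noncomputable def complexW (m : ℕ) (ct a : ℝ) (α : Fin (m + 2) → ℝ) :
    Matrix (Fin (m + 2)) (Fin (m + 2)) ℂ :=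
  ct • (single 0 1 1 - single 1 0 1) +
    a • (single 0 0 (√2 * Complex.I) + single 1 1 (√2 * Complex.I)) +
    ∑ q ∈ Finset.univ \ {0, 1}, α q • single q q (√2 * Complex.I)

theorem complexW_map_ofComplex (m : ℕ) (ct a : ℝ) (α : Fin (m + 2) → ℝ) :
    (complexW m ct a α).map Quaternion.ofComplex =
      ct • Emat (m + 2) 0 1 + a • (qi • Gmat (m + 2) 0 + qi • Gmat (m + 2) 1) +
        ∑ q ∈ Finset.univ \ {0, 1}, α q • (qi • Gmat (m + 2) q) := by
  have hG (q : Fin (m + 2)) :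
      (single q q (√2 * Complex.I)).map Quaternion.ofComplex = qi • Gmat (m + 2) q := by
    rw [Gmat, smul_single, map_single, qi_eq_ofComplex_I, smul_eq_mul, mul_comm, map_mul]
    rfl
  rw [← AlgHom.mapMatrix_apply]
  simp only [complexW, Emat, map_add, map_sub, map_smul, map_sum, AlgHom.mapMatrix_apply, hG,
    map_single, map_one]

def finTwoSumEquiv (m : ℕ) : Fin 2 ⊕ Fin m ≃ Fin (m + 2) :=
  finSumFinEquiv.trans (finCongr (Nat.add_comm 2 m))

@[simp]
theorem finTwoSumEquiv_inl_zero (m : ℕ) : finTwoSumEquiv m (.inl 0) = 0 := by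
  ext; simp [finTwoSumEquiv]

@[simp]
theorem finTwoSumEquiv_inl_one (m : ℕ) : finTwoSumEquiv m (.inl 1) = 1 := by
  ext; simp [finTwoSumEquiv]

@[simp]
theorem finTwoSumEquiv_inr (m : ℕ) (i : Fin m) : finTwoSumEquiv m (.inr i) = i.succ.succ := by
  ext; simp [finTwoSumEquiv]

@[to_additive]
theorem Fin.prod_sdiff_eq_prod_succ_succ {M : Type*} [CommMonoid M] {m : ℕ}
    (g : Fin (m + 2) → M) : ∏ q ∈ Finset.univ \ {0, 1}, g q = ∏ i : Fin m, g i.succ.succ := by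
  rw [Finset.sdiff_eq_filter, Finset.prod_filter, Fin.prod_univ_succ, Fin.prod_univ_succ]
  simp [Fin.succ_succ_ne_one]

def blockForm {R : Type*} [Ring R] {m : ℕ} (z c : R) (d : Fin m → R) :
    Matrix (Fin 2 ⊕ Fin m) (Fin 2 ⊕ Fin m) R :=
  fromBlocks !![z, c; -c, z] 0 0 (diagonal d)

theorem charpoly_blockForm {R : Type*} [CommRing R] {m : ℕ} (z c : R) (d : Fin m → R) :
    (blockForm z c d).charpoly = ((X - C z) ^ 2 + C c ^ 2) * ∏ i, (X - C (d i)) := by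
  rw [blockForm, charpoly_fromBlocks_zero₂₁, charpoly_diagonal, Matrix.charpoly, det_fin_two]
  simp [sq]

theorem complexW_submatrix (m : ℕ) (ct a : ℝ) (α : Fin (m + 2) → ℝ) :
    (complexW m ct a α).submatrix (finTwoSumEquiv m) (finTwoSumEquiv m) =
      blockForm (↑(√2 * a) * Complex.I) ct (fun i => ↑(√2 * α i.succ.succ) * Complex.I) := by
  have h0 (i : Fin m) : (0 : Fin (m + 2)) ≠ i.succ.succ := (Fin.succ_ne_zero _).symm
  have h1 (i : Fin m) : (1 : Fin (m + 2)) ≠ i.succ.succ := (Fin.succ_succ_ne_one _).symm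
  rw [complexW, Fin.sum_sdiff_eq_sum_succ_succ]
  ext (i | i) (j | j)
  · fin_cases i <;> fin_cases j <;>
      simp [blockForm, Matrix.sum_apply, Fin.succ_succ_ne_one, mul_comm, mul_left_comm]
  · fin_cases i <;> simp [blockForm, Matrix.sum_apply, h0, h1, Fin.succ_succ_ne_one]
  · fin_cases j <;> simp [blockForm, Matrix.sum_apply, h0, h1, Fin.succ_succ_ne_one]
  · simp [blockForm, Matrix.sum_apply, single_apply, ite_and, diagonal_apply, h0, h1, mul_comm,
      mul_left_comm]

theorem charpoly_complexW (m : ℕ) (ct a : ℝ) (α : Fin (m + 2) → ℝ) :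
    (complexW m ct a α).charpoly = ((X - C (↑(√2 * a) * Complex.I)) ^ 2 + C (ct : ℂ) ^ 2) *
      ∏ i : Fin m, (X - C (↑(√2 * α i.succ.succ) * Complex.I)) := by
  rw [← charpoly_reindex (finTwoSumEquiv m).symm, reindex_apply, Equiv.symm_symm,
    complexW_submatrix, charpoly_blockForm]

theorem C_I_sq : (C Complex.I : ℂ[X]) ^ 2 = -1 := by
  rw [← C_pow, Complex.I_sq, C_neg, C_1]

open Complex in
theorem X_sub_C_mul_I_mul_map_conj (t : ℝ) :
    (X - C (t * I)) * (X - C ((t : ℂ) * I)).map (starRingEnd ℂ) = X ^ 2 + C ((t ^ 2 : ℝ) : ℂ) := by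
  simp only [Polynomial.map_sub, Polynomial.map_X, Polynomial.map_C]
  simp only [map_mul, conj_ofReal, conj_I]
  push_cast
  simp only [C_pow, C_neg]
  linear_combination (-(C (t : ℂ)) ^ 2) * C_I_sq

open Complex in
theorem sq_X_sub_C_mul_I_add_sq_mul_map_conj (t c : ℝ) :
    ((X - C (t * I)) ^ 2 + C (c : ℂ) ^ 2) *
        ((X - C ((t : ℂ) * I)) ^ 2 + C (c : ℂ) ^ 2).map (starRingEnd ℂ) =
      X ^ 4 + C ((2 * (c ^ 2 + t ^ 2) : ℝ) : ℂ) * X ^ 2 + C (((c ^ 2 - t ^ 2) ^ 2 : ℝ) : ℂ) := by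
  simp only [Polynomial.map_add, Polynomial.map_pow, Polynomial.map_sub, Polynomial.map_X,
    Polynomial.map_C]
  simp only [map_mul, conj_ofReal, conj_I]
  push_cast
  simp only [C_mul, C_pow, C_add, C_sub, C_neg, C_ofNat]
  linear_combination (2 * C (c : ℂ) ^ 2 * C (t : ℂ) ^ 2 - 2 * X ^ 2 * C (t : ℂ) ^ 2 +
    C (t : ℂ) ^ 4 * (C I ^ 2 - 1)) * C_I_sq

-- The paper's index `q = 1, …, l` is `q - 1 : Fin (m + 2)` here.
/-- Statement 15 (item 2) of Proposition `char` of the paper): the characteristic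
polynomial of `dπ(W̃₂)` for `W̃₂ = c̃·E₁₂ + α(iG₁ + iG₂) + Σ_{q=3}^{l} α_q·iG_q`.
Here `l = m + 2 ≥ 2` and the index `q = 1, …, l` of the paper corresponds to
`q : Fin (m + 2)`, the first index being `0`. -/
theorem stmt_15 (m : ℕ) (ct a : ℝ) (α : Fin (m + 2) → ℝ)
    (W : Matrix (Fin (m + 2)) (Fin (m + 2)) ℍ[ℝ])
    (hW : W = ct • Emat (m + 2) 0 1 + a • (qi • Gmat (m + 2) 0 + qi • Gmat (m + 2) 1) +
      ∑ q ∈ Finset.univ \ {0, 1}, α q • (qi • Gmat (m + 2) q)) :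
    (dpi (m + 2) W).charpoly =
      (X ^ 4 + C ((2 * (ct ^ 2 + 2 * a ^ 2) : ℝ) : ℂ) * X ^ 2 +
          C (((ct ^ 2 - 2 * a ^ 2) ^ 2 : ℝ) : ℂ)) *
        ∏ q ∈ Finset.univ \ {0, 1}, (X ^ 2 + C ((2 * (α q) ^ 2 : ℝ) : ℂ)) := by
  have hsq (x : ℝ) : (√2 * x) ^ 2 = 2 * x ^ 2 := by
    rw [mul_pow, Real.sq_sqrt zero_le_two]
  rw [hW, ← complexW_map_ofComplex, charpoly_dpi_map_ofComplex, charpoly_complexW,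
    Polynomial.map_mul, Polynomial.map_prod, mul_mul_mul_comm, ← Finset.prod_mul_distrib,
    sq_X_sub_C_mul_I_add_sq_mul_map_conj, Fin.prod_sdiff_eq_prod_succ_succ]
  simp only [X_sub_C_mul_I_mul_map_conj, hsq]
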